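/- If G is a connected graph with maximum degree Δ where 3 ≤ Δ ≤ n−2 (n the order of G), then F_c(G) ≤ γ_c(G)·(Δ − 1). -/

import Mathlib

/-!
Let `D` be a connected dominating set with `k` vertices and let `Δ` be the maximum degree.
Every vertex outside `D` has a neighbor in `D`, and `D` spans at least `k - 1` edges, so
counting the degrees of the vertices of `D` gives `n - k + 2 (k - 1) ≤ k Δ`, that is
`n ≤ k (Δ - 1) + 2`. Every superset of `D` induces a connected subgraph, so it suffices to find
a forcing superset of `D` with at most `k (Δ - 1)` vertices. If `n ≤ k (Δ - 1) + 1`, remove one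
vertex `u ∉ D`: its neighbor in `D` forces it back. If `n = k (Δ - 1) + 2`, then `n - k > Δ`
because `3 ≤ Δ ≤ n - 2`, so a neighbor `d ∈ D` of `u` misses some `v ∉ D`;
remove `u` and `v`: `d` forces `u`, and then any neighbor of `v` forces `v`.
-/

open SimpleGraph

variable {V : Type*}

/-- One step of the (zero) forcing process: a colored vertex with exactly one
uncolored neighbor forces that neighbor to become colored. -/
def zfStep (G : SimpleGraph V) (S : Set V) : Set V :=
  S ∪ {w | ∃ v ∈ S, G.neighborSet v \ S = {w}}

/-- `S` is a forcing set if iterating the forcing process colors all vertices. -/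
def IsForcingSet (G : SimpleGraph V) (S : Set V) : Prop :=
  ∃ n : ℕ, (zfStep G)^[n] S = Set.univ

/-- A connected forcing set: a forcing set inducing a connected subgraph. -/
def IsConnForcingSet (G : SimpleGraph V) (S : Set V) : Prop :=
  IsForcingSet G S ∧ (G.induce S).Connected

/-- The forcing number `F(G)`. -/
noncomputable def forcingNumber (G : SimpleGraph V) : ℕ :=
  sInf (Set.ncard '' {S : Set V | IsForcingSet G S})

/-- The connected forcing number `F_c(G)`. -/
noncomputable def connForcingNumber (G : SimpleGraph V) : ℕ :=
  sInf (Set.ncard '' {S : Set V | IsConnForcingSet G S})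

/-- A connected dominating set: every vertex outside `D` has a neighbor in `D`,
and `D` induces a connected subgraph. -/
def IsConnDomSet (G : SimpleGraph V) (D : Set V) : Prop :=
  (∀ v ∉ D, ∃ u ∈ D, G.Adj u v) ∧ (G.induce D).Connected

/-- The connected domination number `γ_c(G)`. -/
noncomputable def connDomNumber (G : SimpleGraph V) : ℕ :=
  sInf (Set.ncard '' {D : Set V | IsConnDomSet G D})

section Forcing

variable (G : SimpleGraph V)

lemma zfStep_mono : Monotone (zfStep G) := by
  intro S T hST w hw
  rcases hw with hw | ⟨v, hv, hvw⟩
  · exact Or.inl (hST hw)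
  by_cases hwT : w ∈ T
  · exact Or.inl hwT
  have hw : w ∈ G.neighborSet v \ S := hvw ▸ rfl
  refine Or.inr ⟨v, hST hv, Set.Subset.antisymm (hvw ▸ Set.sdiff_subset_sdiff_right hST) ?_⟩
  exact Set.singleton_subset_iff.mpr ⟨hw.1, hwT⟩

lemma subset_zfStep (S : Set V) : S ⊆ zfStep G S := Set.subset_union_left

variable {G}

lemma IsForcingSet.mono {S T : Set V} (hS : IsForcingSet G S) (hST : S ⊆ T) :
    IsForcingSet G T := by
  obtain ⟨n, hn⟩ := hS
  exact ⟨n, Set.eq_univ_of_univ_subset (hn ▸ (zfStep_mono G).iterate n hST)⟩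

lemma isForcingSet_univ : IsForcingSet G Set.univ := ⟨0, rfl⟩

lemma IsForcingSet.of_insert {S : Set V} {v w : V} (hv : v ∈ S)
    (hvw : G.neighborSet v \ S = {w}) (h : IsForcingSet G (insert w S)) :
    IsForcingSet G S := by
  have hstep : insert w S ⊆ zfStep G S :=
    Set.insert_subset (Or.inr ⟨v, hv, hvw⟩) (subset_zfStep G S)
  obtain ⟨n, hn⟩ := h.mono hstep
  exact ⟨n + 1, by rwa [Function.iterate_succ_apply]⟩

lemma isForcingSet_compl_singleton {u v : V} (hvu : G.Adj v u) : IsForcingSet G {u}ᶜ := by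
  refine IsForcingSet.of_insert (w := u) hvu.ne ?_ ?_
  · ext x
    simp only [Set.mem_sdiff, mem_neighborSet, Set.mem_compl_iff, Set.mem_singleton_iff, not_not]
    exact ⟨And.right, fun hx => ⟨hx ▸ hvu, hx⟩⟩
  · rw [Set.insert_eq, Set.union_compl_self]
    exact isForcingSet_univ

lemma isForcingSet_compl_pair {u v d₁ d₂ : V} (hd₁u : G.Adj d₁ u) (hd₁v : ¬G.Adj d₁ v)
    (hd₁ : d₁ ≠ v) (hd₂v : G.Adj d₂ v) : IsForcingSet G {u, v}ᶜ := by
  have huv : u ≠ v := by rintro rfl; exact hd₁v hd₁u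
  refine IsForcingSet.of_insert (v := d₁) (w := u) (by simp [hd₁u.ne, hd₁]) ?_ ?_
  · ext x
    simp only [Set.mem_sdiff, mem_neighborSet, Set.mem_compl_iff, Set.mem_insert_iff,
      Set.mem_singleton_iff, not_or, not_and, not_not]
    grind
  · convert isForcingSet_compl_singleton hd₂v using 1
    ext x
    simp only [Set.mem_insert_iff, Set.mem_compl_iff, Set.mem_singleton_iff]
    grind

lemma IsConnDomSet.induce_connected_of_subset {D S : Set V} (hD : IsConnDomSet G D)
    (hDS : D ⊆ S) : (G.induce S).Connected := by
  obtain ⟨⟨d₀, hd₀⟩⟩ := hD.2.nonempty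
  have hreach : ∀ d (hd : d ∈ D), (G.induce S).Reachable ⟨d, hDS hd⟩ ⟨d₀, hDS hd₀⟩ :=
    fun d hd => (hD.2.preconnected ⟨d, hd⟩ ⟨d₀, hd₀⟩).map (induceHomOfLE G hDS).toHom
  rw [connected_iff_exists_forall_reachable]
  refine ⟨⟨d₀, hDS hd₀⟩, fun ⟨x, hx⟩ => ?_⟩
  by_cases hxD : x ∈ D
  · exact (hreach x hxD).symm
  · obtain ⟨d, hd, hdx⟩ := hD.1 x hxD
    exact (hreach d hd).symm.trans (Adj.reachable (G := G.induce S) hdx)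

lemma connForcingNumber_le_ncard {D S : Set V} (hD : IsConnDomSet G D) (hDS : D ⊆ S)
    (hS : IsForcingSet G S) : connForcingNumber G ≤ S.ncard :=
  Nat.sInf_le ⟨S, ⟨hS, hD.induce_connected_of_subset hDS⟩, rfl⟩

variable [Fintype V]

lemma connForcingNumber_le_card_sub_one {D : Set V} {u : V} (hD : IsConnDomSet G D)
    (hu : u ∉ D) : connForcingNumber G ≤ Fintype.card V - 1 := by
  obtain ⟨d, -, hdu⟩ := hD.1 u hu
  calc connForcingNumber G ≤ ({u}ᶜ : Set V).ncard :=
        connForcingNumber_le_ncard hD (Set.subset_compl_singleton_iff.mpr hu)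
          (isForcingSet_compl_singleton hdu)
    _ = Fintype.card V - 1 := by
        rw [Set.ncard_compl, Set.ncard_singleton, Nat.card_eq_fintype_card]

lemma connForcingNumber_le_card_sub_two {D : Set V} {u v d : V} (hD : IsConnDomSet G D)
    (hu : u ∉ D) (hv : v ∉ D) (hd : d ∈ D) (hdu : G.Adj d u) (hdv : ¬G.Adj d v) :
    connForcingNumber G ≤ Fintype.card V - 2 := by
  obtain ⟨d', -, hd'v⟩ := hD.1 v hv
  have huv : u ≠ v := by rintro rfl; exact hdv hdu
  have hDS : D ⊆ {u, v}ᶜ := by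
    intro x hx
    simp only [Set.mem_compl_iff, Set.mem_insert_iff, Set.mem_singleton_iff, not_or]
    exact ⟨fun h => hu (h ▸ hx), fun h => hv (h ▸ hx)⟩
  calc connForcingNumber G ≤ ({u, v}ᶜ : Set V).ncard :=
        connForcingNumber_le_ncard hD hDS
          (isForcingSet_compl_pair hdu hdv (fun h => hv (h ▸ hd)) hd'v)
    _ = Fintype.card V - 2 := by
        rw [Set.ncard_compl, Set.ncard_pair huv, Nat.card_eq_fintype_card]

end Forcing

section Counting

open Finset

variable [Fintype V] [DecidableEq V] {G : SimpleGraph V} [DecidableRel G.Adj]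

lemma degree_induce_coe_finset (D : Finset V) (d : (D : Set V)) :
    (G.induce (D : Set V)).degree d = #(G.neighborFinset d ∩ D) := by
  have h := congrArg card (G.map_neighborFinset_induce d)
  rw [card_map, card_neighborFinset_eq_degree, Finset.toFinset_coe] at h
  convert h

lemma two_mul_card_sub_one_le_sum_card_neighborFinset_inter {D : Finset V}
    (hD : (G.induce (D : Set V)).Connected) :
    2 * (#D - 1) ≤ ∑ d ∈ D, #(G.neighborFinset d ∩ D) := by
  have hedges := hD.card_vert_le_card_edgeSet_add_one
  rw [Nat.card_coe_set_eq, Set.ncard_coe_finset, Nat.card_eq_fintype_card, ← edgeFinset_card]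
    at hedges
  calc 2 * (#D - 1) ≤ 2 * #(G.induce (D : Set V)).edgeFinset := by omega
    _ = ∑ d : (D : Set V), (G.induce (D : Set V)).degree d :=
        (sum_degrees_eq_twice_card_edges _).symm
    _ = ∑ d ∈ D, #(G.neighborFinset d ∩ D) := by
        simp only [degree_induce_coe_finset]
        exact sum_coe_sort D fun d => #(G.neighborFinset d ∩ D)

lemma card_compl_le_sum_card_neighborFinset_sdiff {D : Finset V}
    (hD : ∀ x ∉ (D : Set V), ∃ d ∈ (D : Set V), G.Adj d x) :
    #Dᶜ ≤ ∑ d ∈ D, #(G.neighborFinset d \ D) := by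
  refine le_trans (card_le_card fun x hx => ?_) card_biUnion_le
  obtain ⟨d, hd, hdx⟩ := hD x (by simpa using hx)
  exact mem_biUnion.mpr ⟨d, hd, by simpa [hdx] using hx⟩

lemma IsConnDomSet.card_add_card_le_card_mul_maxDegree_add_two {D : Finset V}
    (hD : IsConnDomSet G D) :
    Fintype.card V + #D ≤ #D * G.maxDegree + 2 := by
  have hout := card_compl_le_sum_card_neighborFinset_sdiff hD.1
  have hin := two_mul_card_sub_one_le_sum_card_neighborFinset_inter hD.2
  have hdeg : ∑ d ∈ D, (#(G.neighborFinset d ∩ D) + #(G.neighborFinset d \ D)) ≤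
      #D * G.maxDegree := by
    simp only [card_inter_add_card_sdiff, card_neighborFinset_eq_degree]
    exact sum_le_card_nsmul _ _ _ fun d _ => G.degree_le_maxDegree d
  have hne : D.Nonempty := by simpa [Finset.Nonempty] using hD.2.nonempty
  rw [sum_add_distrib] at hdeg
  have := card_compl D
  have := card_le_univ D
  have := hne.card_pos
  omega

lemma exists_notMem_not_adj_of_maxDegree_lt_card_compl {D : Finset V}
    (h : G.maxDegree < #Dᶜ) (d : V) : ∃ v ∉ D, ¬G.Adj d v := by
  by_contra! hall
  refine h.not_ge ((card_le_card fun x hx => ?_).trans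
    ((G.card_neighborFinset_eq_degree d).trans_le (G.degree_le_maxDegree d)))
  exact (G.mem_neighborFinset d x).mpr (hall x (mem_compl.mp hx))

theorem IsConnDomSet.connForcingNumber_le_card_mul {D : Finset V} (hD : IsConnDomSet G D)
    (h3 : 3 ≤ G.maxDegree) (hn : G.maxDegree + 2 ≤ Fintype.card V) :
    connForcingNumber G ≤ #D * (G.maxDegree - 1) := by
  have hcount := hD.card_add_card_le_card_mul_maxDegree_add_two
  have hK := Nat.mul_sub_one #D G.maxDegree
  by_cases hDu : D = univ
  · subst hDu
    calc connForcingNumber G ≤ (Set.univ : Set V).ncard :=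
          connForcingNumber_le_ncard hD (Set.subset_univ _) isForcingSet_univ
      _ ≤ #(univ : Finset V) * (G.maxDegree - 1) := by
          rw [Set.ncard_univ, Nat.card_eq_fintype_card, card_univ]
          exact Nat.le_mul_of_pos_right _ (by omega)
  obtain ⟨u, hu⟩ : ∃ u, u ∉ D := by
    by_contra! h
    exact hDu (eq_univ_of_forall h)
  by_cases hsmall : Fintype.card V ≤ #D * (G.maxDegree - 1) + 1
  · exact (connForcingNumber_le_card_sub_one hD (D := D) hu).trans (by omega)
  obtain ⟨d, hd, hdu⟩ := hD.1 u hu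
  have hcompl : G.maxDegree < #Dᶜ := by
    rw [card_compl]
    by_contra! h
    have := Nat.mul_le_mul_right (G.maxDegree - 2) (show 2 ≤ #D by omega)
    have := Nat.mul_sub #D G.maxDegree 2
    omega
  obtain ⟨v, hv, hdv⟩ := exists_notMem_not_adj_of_maxDegree_lt_card_compl hcompl d
  exact (connForcingNumber_le_card_sub_two hD (D := D) hu hv hd hdu hdv).trans (by omega)

end Counting

lemma exists_isConnDomSet_ncard_eq_connDomNumber {G : SimpleGraph V}
    (hG : G.Connected) : ∃ D, IsConnDomSet G D ∧ D.ncard = connDomNumber G :=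
  Nat.sInf_mem (s := Set.ncard '' {D | IsConnDomSet G D})
    ⟨_, Set.univ, ⟨fun v hv => absurd (Set.mem_univ v) hv,
      (induceUnivIso G).connected_iff.mpr hG⟩, rfl⟩

/-- If `G` is a connected graph of order `n` with maximum degree `Δ` satisfying
`3 ≤ Δ ≤ n - 2`, then `F_c(G) ≤ γ_c(G)(Δ - 1)`. -/
theorem connForcingNumber_le_connDomNumber_mul {V : Type*} [Fintype V]
    (G : SimpleGraph V) [DecidableRel G.Adj] (hG : G.Connected)
    (h3 : 3 ≤ G.maxDegree) (hn : G.maxDegree ≤ Fintype.card V - 2) :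
    connForcingNumber G ≤ connDomNumber G * (G.maxDegree - 1) := by
  classical
  obtain ⟨D, hD, hDcard⟩ := exists_isConnDomSet_ncard_eq_connDomNumber hG
  lift D to Finset V using D.toFinite
  rw [← hDcard, Set.ncard_coe_finset]
  exact hD.connForcingNumber_le_card_mul h3 (by omega)
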